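/- arXiv:1701.06652 — 5 statements merged into one kernel-verified Lean document; each statement's English description precedes it below -/
import Mathlib

section
/- Let e: ℝⁿ → ℝⁿ, f: ℝⁿ×ℝᵐ → ℝⁿ, g: ℝⁿ×ℝᵐ → ℝᵖ, let P be an n×n symmetric positive-definite matrix, and let μ > 0. If the stability constraint |f(x₁,u) − f(x₂,u)|²_{P⁻¹} − 2(x₁−x₂)'(e(x₁)−e(x₂)) + |x₁−x₂|²_{P+μI} + |g(x₁,u)−g(x₂,u)|² ≤ 0 holds for all x₁, x₂ ∈ ℝⁿ and u ∈ ℝᵐ, then e is strongly monotone: 2(x₁−x₂)'(e(x₁)−e(x₂)) ≥ μ|x₁−x₂|² for all x₁, x₂ ∈ ℝⁿ. -/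
open Matrix

theorem Matrix.dotProduct_add_smul_one_mulVec {ι R : Type*} [Fintype ι] [DecidableEq ι]
    [CommRing R] (P : Matrix ι ι R) (μ : R) (v : ι → R) :
    v ⬝ᵥ ((P + μ • (1 : Matrix ι ι R)) *ᵥ v) = v ⬝ᵥ (P *ᵥ v) + μ * (v ⬝ᵥ v) := by
  rw [add_mulVec, dotProduct_add, smul_mulVec, one_mulVec, dotProduct_smul, smul_eq_mul]

theorem stmt1_general {n m p : ℕ}
    (e : (Fin n → ℝ) → (Fin n → ℝ))
    (f : (Fin n → ℝ) → (Fin m → ℝ) → (Fin n → ℝ))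
    (g : (Fin n → ℝ) → (Fin m → ℝ) → (Fin p → ℝ))
    (P : Matrix (Fin n) (Fin n) ℝ) (hP : P.PosDef) (μ : ℝ)
    (hstab : ∀ (x₁ x₂ : Fin n → ℝ) (u : Fin m → ℝ),
      (f x₁ u - f x₂ u) ⬝ᵥ (P⁻¹ *ᵥ (f x₁ u - f x₂ u))
        - 2 * ((x₁ - x₂) ⬝ᵥ (e x₁ - e x₂))
        + (x₁ - x₂) ⬝ᵥ ((P + μ • (1 : Matrix (Fin n) (Fin n) ℝ)) *ᵥ (x₁ - x₂))
        + (g x₁ u - g x₂ u) ⬝ᵥ (g x₁ u - g x₂ u) ≤ 0) :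
    ∀ x₁ x₂ : Fin n → ℝ,
      μ * ((x₁ - x₂) ⬝ᵥ (x₁ - x₂)) ≤ 2 * ((x₁ - x₂) ⬝ᵥ (e x₁ - e x₂)) := by
  intro x₁ x₂
  have hconstraint := hstab x₁ x₂ 0
  rw [dotProduct_add_smul_one_mulVec] at hconstraint
  have hf : 0 ≤ (f x₁ 0 - f x₂ 0) ⬝ᵥ (P⁻¹ *ᵥ (f x₁ 0 - f x₂ 0)) :=
    hP.inv.posSemidef.dotProduct_mulVec_nonneg _
  have hx : 0 ≤ (x₁ - x₂) ⬝ᵥ (P *ᵥ (x₁ - x₂)) := hP.posSemidef.dotProduct_mulVec_nonneg _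
  have hg : 0 ≤ (g x₁ 0 - g x₂ 0) ⬝ᵥ (g x₁ 0 - g x₂ 0) := by
    simpa using dotProduct_self_star_nonneg (g x₁ 0 - g x₂ 0)
  linarith

/-- If the stability constraint holds for all `x₁, x₂, u`,
then `e` is strongly monotone with modulus `μ`:
`2(x₁−x₂)'(e(x₁)−e(x₂)) ≥ μ|x₁−x₂|²`. -/
theorem stmt1 {n m p : ℕ}
    (e : (Fin n → ℝ) → (Fin n → ℝ))
    (f : (Fin n → ℝ) → (Fin m → ℝ) → (Fin n → ℝ))
    (g : (Fin n → ℝ) → (Fin m → ℝ) → (Fin p → ℝ))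
    (P : Matrix (Fin n) (Fin n) ℝ) (hP : P.PosDef) (μ : ℝ) (hμ : 0 < μ)
    (hstab : ∀ (x₁ x₂ : Fin n → ℝ) (u : Fin m → ℝ),
      (f x₁ u - f x₂ u) ⬝ᵥ (P⁻¹ *ᵥ (f x₁ u - f x₂ u))
        - 2 * ((x₁ - x₂) ⬝ᵥ (e x₁ - e x₂))
        + (x₁ - x₂) ⬝ᵥ ((P + μ • (1 : Matrix (Fin n) (Fin n) ℝ)) *ᵥ (x₁ - x₂))
        + (g x₁ u - g x₂ u) ⬝ᵥ (g x₁ u - g x₂ u) ≤ 0) :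
    ∀ x₁ x₂ : Fin n → ℝ,
      μ * ((x₁ - x₂) ⬝ᵥ (x₁ - x₂)) ≤ 2 * ((x₁ - x₂) ⬝ᵥ (e x₁ - e x₂)) :=
  stmt1_general e f g P hP μ hstab
end

section
/- Let e: ℝⁿ → ℝⁿ be continuous, f: ℝⁿ×ℝᵐ → ℝⁿ, g: ℝⁿ×ℝᵐ → ℝᵖ, let P be an n×n symmetric positive-definite matrix, and let μ > 0. If the stability constraint |f(x₁,u) − f(x₂,u)|²_{P⁻¹} − 2(x₁−x₂)'(e(x₁)−e(x₂)) + |x₁−x₂|²_{P+μI} + |g(x₁,u)−g(x₂,u)|² ≤ 0 holds for all x₁, x₂ ∈ ℝⁿ and u ∈ ℝᵐ, then e is a bijection of ℝⁿ onto ℝⁿ. -/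
/-!
Dropping the nonnegative `f`, `g` and `P` terms from the stability constraint shows that `e` is
strongly monotone with constant `μ / 2`, which makes it injective.
Surjectivity of a continuous strongly monotone map of `ℝᵏ` goes by induction on `k`: for fixed
first `k` coordinates the last component is a strongly monotone function of the last coordinate,
so it takes the prescribed value at a unique point, which depends continuously on the first
coordinates; substituting it leaves a continuous strongly monotone map of `ℝᵏ⁻¹`.
-/

open Matrix Filter Topology

def IsStronglyMonotone {ι : Type*} [Fintype ι] (c : ℝ) (F : (ι → ℝ) → ι → ℝ) : Prop :=
  ∀ a b, c * ((a - b) ⬝ᵥ (a - b)) ≤ (a - b) ⬝ᵥ (F a - F b)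

theorem IsStronglyMonotone.injective {ι : Type*} [Fintype ι] {c : ℝ} {F : (ι → ℝ) → ι → ℝ}
    (hc : 0 < c) (hF : IsStronglyMonotone c F) : Function.Injective F := by
  intro a b hab
  have hle := hF a b
  rw [hab, sub_self, dotProduct_zero] at hle
  have hnonneg : 0 ≤ (a - b) ⬝ᵥ (a - b) := Fintype.sum_nonneg fun i => mul_self_nonneg _
  have hzero : (a - b) ⬝ᵥ (a - b) = 0 := le_antisymm (nonpos_of_mul_nonpos_right hle hc) hnonneg
  exact sub_eq_zero.mp (dotProduct_self_eq_zero.mp hzero)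

section Real

variable {c : ℝ}

theorem mul_abs_sub_le_of_strongMono {φ : ℝ → ℝ}
    (hφ : ∀ s t, c * ((s - t) * (s - t)) ≤ (s - t) * (φ s - φ t)) (s t : ℝ) :
    c * |s - t| ≤ |φ s - φ t| := by
  rcases (abs_nonneg (s - t)).eq_or_lt with hd | hd
  · rw [← hd, mul_zero]
    exact abs_nonneg _
  · refine le_of_mul_le_mul_right ?_ hd
    calc c * |s - t| * |s - t| = c * ((s - t) * (s - t)) := by
          rw [mul_assoc, abs_mul_abs_self]
      _ ≤ (s - t) * (φ s - φ t) := hφ s t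
      _ ≤ |φ s - φ t| * |s - t| := by
          rw [mul_comm, ← abs_mul]
          exact le_abs_self _

theorem surjective_of_strongMono (hc : 0 < c) {φ : ℝ → ℝ} (hφc : Continuous φ)
    (hφ : ∀ s t, c * ((s - t) * (s - t)) ≤ (s - t) * (φ s - φ t)) :
    Function.Surjective φ := by
  have hline : Tendsto (fun t => φ 0 + c * t) atTop atTop :=
    tendsto_atTop_add_const_left _ _ (tendsto_id.const_mul_atTop hc)
  have hline' : Tendsto (fun t => φ 0 + c * t) atBot atBot :=
    tendsto_atBot_add_const_left _ _ (tendsto_id.const_mul_atBot hc)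
  refine hφc.surjective (tendsto_atTop_mono' _ ?_ hline) (tendsto_atBot_mono' _ ?_ hline')
  · filter_upwards [eventually_gt_atTop 0] with t ht
    nlinarith [hφ t 0]
  · filter_upwards [eventually_lt_atBot 0] with t ht
    nlinarith [hφ t 0]

/-- Strong monotonicity of `Φ x` gives `c |τ x - τ b| ≤ |Φ x (τ b) - y|`. -/
theorem continuous_of_strongMono_of_apply_eq {X : Type*} [TopologicalSpace X] (hc : 0 < c)
    {Φ : X → ℝ → ℝ} (hΦc : ∀ t, Continuous fun x => Φ x t)
    (hΦ : ∀ x s t, c * ((s - t) * (s - t)) ≤ (s - t) * (Φ x s - Φ x t))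
    {τ : X → ℝ} {y : ℝ} (hτ : ∀ x, Φ x (τ x) = y) : Continuous τ := by
  refine continuous_iff_continuousAt.mpr fun b => ?_
  rw [ContinuousAt, tendsto_iff_norm_sub_tendsto_zero]
  have hbound : ∀ x, ‖τ x - τ b‖ ≤ |Φ x (τ b) - y| / c := fun x => by
    have h := mul_abs_sub_le_of_strongMono (hΦ x) (τ x) (τ b)
    rw [hτ, abs_sub_comm y] at h
    rw [Real.norm_eq_abs, le_div_iff₀ hc, mul_comm]
    exact h
  refine squeeze_zero (fun _ => norm_nonneg _) hbound ?_
  have hlim := (((hΦc (τ b)).tendsto b).sub_const y).abs.div_const c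
  rwa [hτ, sub_self, abs_zero, zero_div] at hlim

end Real

section Fin

variable {k : ℕ} {c : ℝ} {F : (Fin (k + 1) → ℝ) → Fin (k + 1) → ℝ}

theorem Fin.snoc_sub_snoc {α : Type*} [Sub α] (a b : Fin k → α) (s t : α) :
    (Fin.snoc a s : Fin (k + 1) → α) - Fin.snoc b t = Fin.snoc (a - b) (s - t) := by
  ext i
  refine Fin.lastCases ?_ (fun j => ?_) i <;> simp

theorem Matrix.snoc_dotProduct {R : Type*} [Mul R] [AddCommMonoid R] (v : Fin k → R) (s : R)
    (w : Fin (k + 1) → R) : Fin.snoc v s ⬝ᵥ w = v ⬝ᵥ Fin.init w + s * w (Fin.last k) := by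
  simp [dotProduct, Fin.sum_univ_castSucc, Fin.init]

theorem IsStronglyMonotone.last_snoc (hF : IsStronglyMonotone c F) (x : Fin k → ℝ) (s t : ℝ) :
    c * ((s - t) * (s - t))
      ≤ (s - t) * (F (Fin.snoc x s) (Fin.last k) - F (Fin.snoc x t) (Fin.last k)) := by
  simpa [Fin.snoc_sub_snoc, snoc_dotProduct, mul_sub] using hF (Fin.snoc x s) (Fin.snoc x t)

theorem IsStronglyMonotone.init_snoc (hc : 0 ≤ c) (hF : IsStronglyMonotone c F)
    {τ : (Fin k → ℝ) → ℝ} {y : ℝ} (hτ : ∀ x, F (Fin.snoc x (τ x)) (Fin.last k) = y) :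
    IsStronglyMonotone c fun x => Fin.init (F (Fin.snoc x (τ x))) := fun a b => by
  have h := hF (Fin.snoc a (τ a)) (Fin.snoc b (τ b))
  simp only [Fin.snoc_sub_snoc, snoc_dotProduct, Fin.init_snoc, Fin.snoc_last, Pi.sub_apply, hτ,
    sub_self, mul_zero, add_zero] at h
  calc c * ((a - b) ⬝ᵥ (a - b))
      ≤ c * ((a - b) ⬝ᵥ (a - b) + (τ a - τ b) * (τ a - τ b)) := by
        nlinarith [mul_nonneg hc (mul_self_nonneg (τ a - τ b))]
    _ ≤ _ := h

end Fin

theorem IsStronglyMonotone.surjective {k : ℕ} {c : ℝ} {F : (Fin k → ℝ) → Fin k → ℝ}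
    (hc : 0 < c) (hFc : Continuous F) (hF : IsStronglyMonotone c F) :
    Function.Surjective F := by
  induction k with
  | zero => exact fun y => ⟨y, Subsingleton.elim _ _⟩
  | succ k ih =>
    intro y
    have hlast : Continuous fun q : (Fin k → ℝ) × ℝ => F (Fin.snoc q.1 q.2) (Fin.last k) :=
      (continuous_apply _).comp
        (hFc.comp (continuous_fst.finSnoc (A := fun _ => ℝ) continuous_snd))
    have hroot : ∀ x, ∃ t, F (Fin.snoc x t) (Fin.last k) = y (Fin.last k) := fun x =>
      surjective_of_strongMono hc (hlast.comp (Continuous.prodMk_right x)) (hF.last_snoc x) _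
    choose τ hτ using hroot
    have hτc : Continuous τ := continuous_of_strongMono_of_apply_eq hc
      (fun t => hlast.comp (Continuous.prodMk_left t)) hF.last_snoc hτ
    have hGc : Continuous fun x => Fin.init (F (Fin.snoc x (τ x))) :=
      (hFc.comp (continuous_id.finSnoc (A := fun _ => ℝ) hτc)).finInit
    obtain ⟨x, hx⟩ := ih hGc (hF.init_snoc hc.le hτ) (Fin.init y)
    beta_reduce at hx
    refine ⟨Fin.snoc x (τ x), ?_⟩
    rw [← Fin.snoc_init_self (F _), hx, hτ, Fin.snoc_init_self]

theorem Matrix.PosSemidef.mul_dotProduct_self_le {ι : Type*} [Fintype ι] [DecidableEq ι]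
    {P : Matrix ι ι ℝ} (hP : P.PosSemidef) (μ : ℝ) (v : ι → ℝ) :
    μ * (v ⬝ᵥ v) ≤ v ⬝ᵥ ((P + μ • (1 : Matrix ι ι ℝ)) *ᵥ v) := by
  have hPv : 0 ≤ v ⬝ᵥ (P *ᵥ v) := by simpa using hP.dotProduct_mulVec_nonneg v
  rw [add_mulVec, dotProduct_add, smul_mulVec, one_mulVec, dotProduct_smul, smul_eq_mul]
  linarith

/-- If `e` is continuous and the stability constraint holds for all
`x₁, x₂, u`, then `e` is a bijection of `ℝⁿ` onto `ℝⁿ`. -/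
theorem stmt2 {n m p : ℕ}
    (e : (Fin n → ℝ) → (Fin n → ℝ)) (he : Continuous e)
    (f : (Fin n → ℝ) → (Fin m → ℝ) → (Fin n → ℝ))
    (g : (Fin n → ℝ) → (Fin m → ℝ) → (Fin p → ℝ))
    (P : Matrix (Fin n) (Fin n) ℝ) (hP : P.PosDef) (μ : ℝ) (hμ : 0 < μ)
    (hstab : ∀ (x₁ x₂ : Fin n → ℝ) (u : Fin m → ℝ),
      (f x₁ u - f x₂ u) ⬝ᵥ (P⁻¹ *ᵥ (f x₁ u - f x₂ u))
        - 2 * ((x₁ - x₂) ⬝ᵥ (e x₁ - e x₂))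
        + (x₁ - x₂) ⬝ᵥ ((P + μ • (1 : Matrix (Fin n) (Fin n) ℝ)) *ᵥ (x₁ - x₂))
        + (g x₁ u - g x₂ u) ⬝ᵥ (g x₁ u - g x₂ u) ≤ 0) :
    Function.Bijective e := by
  have hmono : IsStronglyMonotone (μ / 2) e := fun a b => by
    have hf := hP.inv.posSemidef.dotProduct_mulVec_nonneg (f a 0 - f b 0)
    have hg : 0 ≤ (g a 0 - g b 0) ⬝ᵥ (g a 0 - g b 0) :=
      Fintype.sum_nonneg fun i => mul_self_nonneg _
    have hx := hP.posSemidef.mul_dotProduct_self_le μ (a - b)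
    simp only [star_trivial] at hf
    linarith [hstab a b 0]
  exact ⟨hmono.injective (by positivity), hmono.surjective (by positivity) he⟩
end

section
/- Let e: ℝⁿ → ℝⁿ, f: ℝⁿ×ℝᵐ → ℝⁿ, g: ℝⁿ×ℝᵐ → ℝᵖ, let P be an n×n symmetric positive-definite matrix, and let μ > 0. If the stability constraint |f(x₁,u) − f(x₂,u)|²_{P⁻¹} − 2(x₁−x₂)'(e(x₁)−e(x₂)) + |x₁−x₂|²_{P+μI} + |g(x₁,u)−g(x₂,u)|² ≤ 0 holds for all x₁, x₂ ∈ ℝⁿ and u ∈ ℝᵐ, then the incremental dissipation inequality −|e(x₁)−e(x₂)|²_{P⁻¹} + |f(x₁,u)−f(x₂,u)|²_{P⁻¹} + μ|x₁−x₂|² + |g(x₁,u)−g(x₂,u)|² ≤ 0 also holds for all x₁, x₂ ∈ ℝⁿ and u ∈ ℝᵐ. -/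
open Matrix

namespace Matrix

variable {ι : Type*} [Fintype ι]

lemma dotProduct_add_smul_one_mulVec_s3 [DecidableEq ι] {R : Type*}
    [CommSemiring R] (P : Matrix ι ι R) (μ : R) (x : ι → R) :
    x ⬝ᵥ ((P + μ • (1 : Matrix ι ι R)) *ᵥ x) = x ⬝ᵥ (P *ᵥ x) + μ * (x ⬝ᵥ x) := by
  rw [add_mulVec, dotProduct_add, smul_mulVec, one_mulVec, dotProduct_smul, smul_eq_mul]

/-- Young's inequality for the pair of dual norms `|·|_P`, `|·|_{P⁻¹}`. -/
lemma PosDef.two_mul_dotProduct_le [DecidableEq ι] {P : Matrix ι ι ℝ} (hP : P.PosDef)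
    (b c : ι → ℝ) :
    2 * (b ⬝ᵥ c) ≤ b ⬝ᵥ (P *ᵥ b) + c ⬝ᵥ (P⁻¹ *ᵥ c) := by
  have hPc : P *ᵥ (P⁻¹ *ᵥ c) = c := by
    rw [mulVec_mulVec, mul_nonsing_inv _ ((isUnit_iff_isUnit_det P).mp hP.isUnit), one_mulVec]
  have hcross : (P⁻¹ *ᵥ c) ⬝ᵥ (P *ᵥ b) = b ⬝ᵥ c := by
    rw [dotProduct_mulVec, ← mulVec_transpose, ← conjTranspose_eq_transpose_of_trivial,
      hP.isHermitian.eq, hPc, dotProduct_comm]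
  -- `|b - P⁻¹ c|²_P ≥ 0`, expanded.
  have hsq := hP.posSemidef.dotProduct_mulVec_nonneg (b - P⁻¹ *ᵥ c)
  simp only [star_trivial, mulVec_sub, sub_dotProduct, dotProduct_sub, hPc, hcross] at hsq
  rw [dotProduct_comm (P⁻¹ *ᵥ c) c] at hsq
  linarith

end Matrix

theorem stmt3_general {n m p : ℕ}
    (e : (Fin n → ℝ) → (Fin n → ℝ))
    (f : (Fin n → ℝ) → (Fin m → ℝ) → (Fin n → ℝ))
    (g : (Fin n → ℝ) → (Fin m → ℝ) → (Fin p → ℝ))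
    (P : Matrix (Fin n) (Fin n) ℝ) (hP : P.PosDef) (μ : ℝ)
    (hstab : ∀ (x₁ x₂ : Fin n → ℝ) (u : Fin m → ℝ),
      (f x₁ u - f x₂ u) ⬝ᵥ (P⁻¹ *ᵥ (f x₁ u - f x₂ u))
        - 2 * ((x₁ - x₂) ⬝ᵥ (e x₁ - e x₂))
        + (x₁ - x₂) ⬝ᵥ ((P + μ • (1 : Matrix (Fin n) (Fin n) ℝ)) *ᵥ (x₁ - x₂))
        + (g x₁ u - g x₂ u) ⬝ᵥ (g x₁ u - g x₂ u) ≤ 0) :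
    ∀ (x₁ x₂ : Fin n → ℝ) (u : Fin m → ℝ),
      -((e x₁ - e x₂) ⬝ᵥ (P⁻¹ *ᵥ (e x₁ - e x₂)))
        + (f x₁ u - f x₂ u) ⬝ᵥ (P⁻¹ *ᵥ (f x₁ u - f x₂ u))
        + μ * ((x₁ - x₂) ⬝ᵥ (x₁ - x₂))
        + (g x₁ u - g x₂ u) ⬝ᵥ (g x₁ u - g x₂ u) ≤ 0 := by
  intro x₁ x₂ u
  have hstab' := hstab x₁ x₂ u
  rw [dotProduct_add_smul_one_mulVec_s3] at hstab'
  linarith [hP.two_mul_dotProduct_le (x₁ - x₂) (e x₁ - e x₂)]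

/-- The stability constraint implies the incremental dissipation
inequality `−|e(x₁)−e(x₂)|²_{P⁻¹} + |f(x₁,u)−f(x₂,u)|²_{P⁻¹} + μ|x₁−x₂|²
+ |g(x₁,u)−g(x₂,u)|² ≤ 0` for all `x₁, x₂, u`. -/
theorem stmt3 {n m p : ℕ}
    (e : (Fin n → ℝ) → (Fin n → ℝ))
    (f : (Fin n → ℝ) → (Fin m → ℝ) → (Fin n → ℝ))
    (g : (Fin n → ℝ) → (Fin m → ℝ) → (Fin p → ℝ))
    (P : Matrix (Fin n) (Fin n) ℝ) (hP : P.PosDef) (μ : ℝ) (hμ : 0 < μ)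
    (hstab : ∀ (x₁ x₂ : Fin n → ℝ) (u : Fin m → ℝ),
      (f x₁ u - f x₂ u) ⬝ᵥ (P⁻¹ *ᵥ (f x₁ u - f x₂ u))
        - 2 * ((x₁ - x₂) ⬝ᵥ (e x₁ - e x₂))
        + (x₁ - x₂) ⬝ᵥ ((P + μ • (1 : Matrix (Fin n) (Fin n) ℝ)) *ᵥ (x₁ - x₂))
        + (g x₁ u - g x₂ u) ⬝ᵥ (g x₁ u - g x₂ u) ≤ 0) :
    ∀ (x₁ x₂ : Fin n → ℝ) (u : Fin m → ℝ),
      -((e x₁ - e x₂) ⬝ᵥ (P⁻¹ *ᵥ (e x₁ - e x₂)))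
        + (f x₁ u - f x₂ u) ⬝ᵥ (P⁻¹ *ᵥ (f x₁ u - f x₂ u))
        + μ * ((x₁ - x₂) ⬝ᵥ (x₁ - x₂))
        + (g x₁ u - g x₂ u) ⬝ᵥ (g x₁ u - g x₂ u) ≤ 0 :=
  stmt3_general e f g P hP μ hstab
end

section
/- Let a: ℝⁿ×ℝᵐ → ℝⁿ and g: ℝⁿ×ℝᵐ → ℝᵖ, and suppose there exist a symmetric positive-definite matrix M ∈ ℝⁿˣⁿ and μ > 0 such that |a(x₁,u)−a(x₂,u)|²_M − |x₁−x₂|²_{M−μI} ≤ −|g(x₁,u)−g(x₂,u)|² for all x₁, x₂ ∈ ℝⁿ and u ∈ ℝᵐ (quadratic incremental ℓ² stability with margin μ). Then the functions e(x) := Mx, f(x,u) := M a(x,u), together with P := M and the same g and μ, satisfy the stability constraint |f(x₁,u) − f(x₂,u)|²_{P⁻¹} − 2(x₁−x₂)'(e(x₁)−e(x₂)) + |x₁−x₂|²_{P+μI} + |g(x₁,u)−g(x₂,u)|² ≤ 0 for all x₁, x₂ ∈ ℝⁿ and u ∈ ℝᵐ. -/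
open Matrix

/-- If `(a, g)` is quadratically incrementally ℓ² stable with metric
`M` and margin `μ`, i.e. `|a(x₁,u)−a(x₂,u)|²_M − |x₁−x₂|²_{M−μI} ≤ −|g(x₁,u)−g(x₂,u)|²`,
then `e(x) = Mx`, `f(x,u) = M a(x,u)`, `P = M` satisfy the stability constraint. -/
theorem stmt5 {n m p : ℕ}
    (a : (Fin n → ℝ) → (Fin m → ℝ) → (Fin n → ℝ))
    (g : (Fin n → ℝ) → (Fin m → ℝ) → (Fin p → ℝ))
    (M : Matrix (Fin n) (Fin n) ℝ) (hM : M.PosDef) (μ : ℝ) (hμ : 0 < μ)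
    (hquad : ∀ (x₁ x₂ : Fin n → ℝ) (u : Fin m → ℝ),
      (a x₁ u - a x₂ u) ⬝ᵥ (M *ᵥ (a x₁ u - a x₂ u))
        - (x₁ - x₂) ⬝ᵥ ((M - μ • (1 : Matrix (Fin n) (Fin n) ℝ)) *ᵥ (x₁ - x₂))
        ≤ -((g x₁ u - g x₂ u) ⬝ᵥ (g x₁ u - g x₂ u))) :
    ∀ (x₁ x₂ : Fin n → ℝ) (u : Fin m → ℝ),
      (M *ᵥ a x₁ u - M *ᵥ a x₂ u) ⬝ᵥ (M⁻¹ *ᵥ (M *ᵥ a x₁ u - M *ᵥ a x₂ u))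
        - 2 * ((x₁ - x₂) ⬝ᵥ (M *ᵥ x₁ - M *ᵥ x₂))
        + (x₁ - x₂) ⬝ᵥ ((M + μ • (1 : Matrix (Fin n) (Fin n) ℝ)) *ᵥ (x₁ - x₂))
        + (g x₁ u - g x₂ u) ⬝ᵥ (g x₁ u - g x₂ u) ≤ 0 := by
  intro x₁ x₂ u
  have hinv : M⁻¹ * M = 1 := nonsing_inv_mul M (isUnit_iff_ne_zero.mpr hM.det_pos.ne')
  have key := hquad x₁ x₂ u
  have e1 : M *ᵥ a x₁ u - M *ᵥ a x₂ u = M *ᵥ (a x₁ u - a x₂ u) := by rw [mulVec_sub]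
  have e2 : M⁻¹ *ᵥ (M *ᵥ (a x₁ u - a x₂ u)) = a x₁ u - a x₂ u := by
    rw [mulVec_mulVec, hinv, one_mulVec]
  have e3 : M *ᵥ x₁ - M *ᵥ x₂ = M *ᵥ (x₁ - x₂) := by rw [mulVec_sub]
  have e4 : (x₁ - x₂) ⬝ᵥ (μ • (1 : Matrix (Fin n) (Fin n) ℝ)) *ᵥ (x₁ - x₂)
      = μ * ((x₁ - x₂) ⬝ᵥ (x₁ - x₂)) := by
    rw [smul_mulVec, one_mulVec, dotProduct_smul, smul_eq_mul]
  rw [e1, e2, dotProduct_comm (M *ᵥ (a x₁ u - a x₂ u)), e3, add_mulVec,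
    dotProduct_add, e4]
  rw [sub_mulVec, dotProduct_sub, e4] at key
  linarith
end

section
/- Let e: ℝⁿ → ℝⁿ and f: ℝⁿ×ℝᵐ → ℝⁿ be continuously differentiable with Jacobians E(x) = ∂e/∂x and F(x,u) = ∂f/∂x, let g: ℝⁿ×ℝᵐ → ℝᵖ be continuously differentiable with G(x,u) = ∂g/∂x, let P be symmetric positive definite and μ > 0, and suppose the contraction inequality |F(x,u)Δ|²_{P⁻¹} − |E(x)Δ|²_{P⁻¹} + |G(x,u)Δ|² ≤ −μ|Δ|² holds for all x ∈ ℝⁿ, u ∈ ℝᵐ, Δ ∈ ℝⁿ. Let u: ℕ → ℝᵐ, and let x: ℕ → ℝⁿ and Δ: ℕ → ℝⁿ be sequences satisfying the differential dynamics E(x(t+1))Δ(t+1) = F(x(t),u(t))Δ(t) for all t. Then for every T ∈ ℕ, Σ_{t=0}^{T} ( |G(x(t),u(t))Δ(t)|² + μ|Δ(t)|² ) ≤ |E(x(0))Δ(0)|²_{P⁻¹}. -/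
open Matrix

/-! The differential storage `V(t) = |E(x t) Δ t|²_{P⁻¹}` is nonnegative, and along the differential
dynamics the contraction inequality says exactly that each step dissipates at least the supply
`|G Δ|² + μ|Δ|²`; summing, the supplies telescope against the storage. -/

theorem Finset.sum_range_le_sub_of_le_sub_succ {α : Type*} [AddCommGroup α] [PartialOrder α]
    [IsOrderedAddMonoid α] {w V : ℕ → α} (h : ∀ t, w t ≤ V t - V (t + 1)) (T : ℕ) :
    ∑ t ∈ Finset.range T, w t ≤ V 0 - V T :=
  (Finset.sum_le_sum fun t _ => h t).trans_eq (Finset.sum_range_sub' V T)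

theorem Finset.sum_range_le_of_le_sub_succ {α : Type*} [AddCommGroup α] [PartialOrder α]
    [IsOrderedAddMonoid α] {w V : ℕ → α} (hV : ∀ t, 0 ≤ V t) (h : ∀ t, w t ≤ V t - V (t + 1))
    (T : ℕ) : ∑ t ∈ Finset.range T, w t ≤ V 0 :=
  (Finset.sum_range_le_sub_of_le_sub_succ h T).trans (sub_le_self _ (hV T))

theorem differentialStorage_succ_le {X U ι κ : Type*} [Fintype ι] [Fintype κ]
    {E : X → Matrix ι ι ℝ} {F : X → U → Matrix ι ι ℝ} {G : X → U → Matrix κ ι ℝ}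
    {Q : Matrix ι ι ℝ} {μ : ℝ}
    (hcontr : ∀ x u Δ, (F x u *ᵥ Δ) ⬝ᵥ (Q *ᵥ (F x u *ᵥ Δ)) - (E x *ᵥ Δ) ⬝ᵥ (Q *ᵥ (E x *ᵥ Δ))
        + (G x u *ᵥ Δ) ⬝ᵥ (G x u *ᵥ Δ) ≤ -μ * (Δ ⬝ᵥ Δ))
    {u : ℕ → U} {x : ℕ → X} {Δ : ℕ → ι → ℝ}
    (hdiff : ∀ t, E (x (t + 1)) *ᵥ Δ (t + 1) = F (x t) (u t) *ᵥ Δ t) (t : ℕ) :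
    (G (x t) (u t) *ᵥ Δ t) ⬝ᵥ (G (x t) (u t) *ᵥ Δ t) + μ * (Δ t ⬝ᵥ Δ t)
      ≤ (E (x t) *ᵥ Δ t) ⬝ᵥ (Q *ᵥ (E (x t) *ᵥ Δ t))
        - (E (x (t + 1)) *ᵥ Δ (t + 1)) ⬝ᵥ (Q *ᵥ (E (x (t + 1)) *ᵥ Δ (t + 1))) := by
  rw [hdiff t]
  linarith [hcontr (x t) (u t) (Δ t)]

theorem stmt14_general {n m p : ℕ}
    (E : (Fin n → ℝ) → Matrix (Fin n) (Fin n) ℝ)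
    (F : (Fin n → ℝ) → (Fin m → ℝ) → Matrix (Fin n) (Fin n) ℝ)
    (G : (Fin n → ℝ) → (Fin m → ℝ) → Matrix (Fin p) (Fin n) ℝ)
    (P : Matrix (Fin n) (Fin n) ℝ) (hP : P.PosDef) (μ : ℝ)
    (hcontr : ∀ (x : Fin n → ℝ) (u : Fin m → ℝ) (Δ : Fin n → ℝ),
      (F x u *ᵥ Δ) ⬝ᵥ (P⁻¹ *ᵥ (F x u *ᵥ Δ))
        - (E x *ᵥ Δ) ⬝ᵥ (P⁻¹ *ᵥ (E x *ᵥ Δ))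
        + (G x u *ᵥ Δ) ⬝ᵥ (G x u *ᵥ Δ) ≤ -μ * (Δ ⬝ᵥ Δ))
    (u : ℕ → Fin m → ℝ) (x : ℕ → Fin n → ℝ) (Δ : ℕ → Fin n → ℝ)
    (hdiff : ∀ t : ℕ, E (x (t + 1)) *ᵥ Δ (t + 1) = F (x t) (u t) *ᵥ Δ t) :
    ∀ T : ℕ,
      ∑ t ∈ Finset.range (T + 1),
          ((G (x t) (u t) *ᵥ Δ t) ⬝ᵥ (G (x t) (u t) *ᵥ Δ t) + μ * (Δ t ⬝ᵥ Δ t))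
        ≤ (E (x 0) *ᵥ Δ 0) ⬝ᵥ (P⁻¹ *ᵥ (E (x 0) *ᵥ Δ 0)) := fun T =>
  Finset.sum_range_le_of_le_sub_succ
    (V := fun t => (E (x t) *ᵥ Δ t) ⬝ᵥ (P⁻¹ *ᵥ (E (x t) *ᵥ Δ t)))
    (fun _ => hP.inv.posSemidef.dotProduct_mulVec_nonneg _)
    (differentialStorage_succ_le hcontr hdiff) (T + 1)

/-- Let `e, f, g` be continuously differentiable with Jacobians
(with respect to `x`) `E(x)`, `F(x,u)`, `G(x,u)`, and suppose the contraction
inequality `|F(x,u)Δ|²_{P⁻¹} − |E(x)Δ|²_{P⁻¹} + |G(x,u)Δ|² ≤ −μ|Δ|²` holds for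
all `x, u, Δ`. Then along any solution of the differential dynamics
`E(x(t+1))Δ(t+1) = F(x(t),u(t))Δ(t)`, for every `T`,
`Σ_{t=0}^{T} ( |G(x(t),u(t))Δ(t)|² + μ|Δ(t)|² ) ≤ |E(x(0))Δ(0)|²_{P⁻¹}`. -/
theorem stmt14 {n m p : ℕ}
    (e : (Fin n → ℝ) → (Fin n → ℝ))
    (f : (Fin n → ℝ) → (Fin m → ℝ) → (Fin n → ℝ))
    (g : (Fin n → ℝ) → (Fin m → ℝ) → (Fin p → ℝ))
    (E : (Fin n → ℝ) → Matrix (Fin n) (Fin n) ℝ)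
    (F : (Fin n → ℝ) → (Fin m → ℝ) → Matrix (Fin n) (Fin n) ℝ)
    (G : (Fin n → ℝ) → (Fin m → ℝ) → Matrix (Fin p) (Fin n) ℝ)
    (hE : ∀ x, HasFDerivAt e
      (LinearMap.toContinuousLinearMap (Matrix.toLin' (E x))) x)
    (hF : ∀ (x : Fin n → ℝ) (u : Fin m → ℝ), HasFDerivAt (fun z => f z u)
      (LinearMap.toContinuousLinearMap (Matrix.toLin' (F x u))) x)
    (hG : ∀ (x : Fin n → ℝ) (u : Fin m → ℝ), HasFDerivAt (fun z => g z u)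
      (LinearMap.toContinuousLinearMap (Matrix.toLin' (G x u))) x)
    (hEcont : Continuous E)
    (hFcont : Continuous fun q : (Fin n → ℝ) × (Fin m → ℝ) => F q.1 q.2)
    (hGcont : Continuous fun q : (Fin n → ℝ) × (Fin m → ℝ) => G q.1 q.2)
    (P : Matrix (Fin n) (Fin n) ℝ) (hP : P.PosDef) (μ : ℝ) (hμ : 0 < μ)
    (hcontr : ∀ (x : Fin n → ℝ) (u : Fin m → ℝ) (Δ : Fin n → ℝ),
      (F x u *ᵥ Δ) ⬝ᵥ (P⁻¹ *ᵥ (F x u *ᵥ Δ))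
        - (E x *ᵥ Δ) ⬝ᵥ (P⁻¹ *ᵥ (E x *ᵥ Δ))
        + (G x u *ᵥ Δ) ⬝ᵥ (G x u *ᵥ Δ) ≤ -μ * (Δ ⬝ᵥ Δ))
    (u : ℕ → Fin m → ℝ) (x : ℕ → Fin n → ℝ) (Δ : ℕ → Fin n → ℝ)
    (hdiff : ∀ t : ℕ, E (x (t + 1)) *ᵥ Δ (t + 1) = F (x t) (u t) *ᵥ Δ t) :
    ∀ T : ℕ,
      ∑ t ∈ Finset.range (T + 1),
          ((G (x t) (u t) *ᵥ Δ t) ⬝ᵥ (G (x t) (u t) *ᵥ Δ t) + μ * (Δ t ⬝ᵥ Δ t))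
        ≤ (E (x 0) *ᵥ Δ 0) ⬝ᵥ (P⁻¹ *ᵥ (E (x 0) *ᵥ Δ 0)) :=
  stmt14_general E F G P hP μ hcontr u x Δ hdiff
end
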